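/- For probability-like vectors z, z' with positive entries, the KL divergence D(z', z) = z'·log(z') − z'·log(z) satisfies (z' − z)·∇_{z'} D(z', z) ≥ (1/2)‖z' − z‖², where ∇_{z'} D(z', z) = log(z') − log(z) + 1 (componentwise). -/

import Mathlib

/-!
From `log x ≥ 1 - 1/x` one gets `log a - log b ≥ (a - b) / max a b` for positive `a, b`, so on
`(0, 1]` each term `(a - b) (log a - log b)` dominates `(a - b)²`. Entries of a probability vector
lie in `(0, 1]`, and the `+ 1` in the gradient contributes `∑ (z' - z) = 0`.
-/

open Finset Real

lemma sub_div_le_log_sub_log {a b : ℝ} (ha : 0 < a) (hb : 0 < b) :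
    (a - b) / a ≤ log a - log b := by
  have := one_sub_inv_le_log_of_pos (div_pos ha hb)
  rwa [log_div ha.ne' hb.ne', inv_div, one_sub_div ha.ne'] at this

lemma sq_sub_le_mul_log_sub_log_of_le {a b : ℝ} (hb : 0 < b) (ha1 : a ≤ 1) (hba : b ≤ a) :
    (a - b) ^ 2 ≤ (a - b) * (log a - log b) := by
  have ha : 0 < a := hb.trans_le hba
  have hab : 0 ≤ a - b := sub_nonneg.2 hba
  calc (a - b) ^ 2 = (a - b) * (a - b) := sq _
    _ ≤ (a - b) * ((a - b) / a) := mul_le_mul_of_nonneg_left (le_div_self hab ha ha1) hab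
    _ ≤ (a - b) * (log a - log b) := mul_le_mul_of_nonneg_left (sub_div_le_log_sub_log ha hb) hab

lemma sq_sub_le_mul_log_sub_log {a b : ℝ} (ha : 0 < a) (hb : 0 < b) (ha1 : a ≤ 1) (hb1 : b ≤ 1) :
    (a - b) ^ 2 ≤ (a - b) * (log a - log b) := by
  rcases le_total b a with hba | hab
  · exact sq_sub_le_mul_log_sub_log_of_le hb ha1 hba
  · convert sq_sub_le_mul_log_sub_log_of_le ha hb1 hab using 1 <;> ring

lemma sum_sq_sub_le_sum_mul_log_sub_log {ι : Type*} {s : Finset ι} {p q : ι → ℝ}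
    (hp : ∀ i ∈ s, 0 < p i) (hq : ∀ i ∈ s, 0 < q i)
    (hp1 : ∀ i ∈ s, p i ≤ 1) (hq1 : ∀ i ∈ s, q i ≤ 1) :
    ∑ i ∈ s, (p i - q i) ^ 2 ≤ ∑ i ∈ s, (p i - q i) * (log (p i) - log (q i)) :=
  sum_le_sum fun i hi => sq_sub_le_mul_log_sub_log (hp i hi) (hq i hi) (hp1 i hi) (hq1 i hi)

lemma le_one_of_sum_eq_one {ι : Type*} [Fintype ι] {p : ι → ℝ} (hp : ∀ i, 0 ≤ p i)
    (hsum : ∑ i, p i = 1) (i : ι) : p i ≤ 1 :=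
  hsum ▸ single_le_sum (fun j _ => hp j) (mem_univ i)

/-- For probability-like vectors `z, z'` with positive entries, the KL divergence
`D(z', z) = z'·log z' − z'·log z` satisfies
`(z' − z)·∇_{z'} D(z', z) ≥ (1/2) ‖z' − z‖²`,
where `∇_{z'} D(z', z) = log z' − log z + 1` componentwise. -/
theorem stmt0 (n : ℕ) (z z' : Fin n → ℝ)
    (hz : ∀ i, 0 < z i) (hz' : ∀ i, 0 < z' i)
    (hsz : ∑ i, z i = 1) (hsz' : ∑ i, z' i = 1) :
    ∑ i, (z' i - z i) * (Real.log (z' i) - Real.log (z i) + 1)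
      ≥ (1 / 2) * ∑ i, (z' i - z i) ^ 2 := by
  have hz1 := le_one_of_sum_eq_one (fun i => (hz i).le) hsz
  have hz'1 := le_one_of_sum_eq_one (fun i => (hz' i).le) hsz'
  have hsq : 0 ≤ ∑ i, (z' i - z i) ^ 2 := sum_nonneg fun i _ => sq_nonneg _
  calc ∑ i, (z' i - z i) * (log (z' i) - log (z i) + 1)
      = ∑ i, (z' i - z i) * (log (z' i) - log (z i)) := by
        simp only [mul_add, mul_one, sum_add_distrib, sum_sub_distrib, hsz, hsz', sub_self,
          add_zero]
    _ ≥ ∑ i, (z' i - z i) ^ 2 :=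
        sum_sq_sub_le_sum_mul_log_sub_log (fun i _ => hz' i) (fun i _ => hz i)
          (fun i _ => hz'1 i) (fun i _ => hz1 i)
    _ ≥ (1 / 2) * ∑ i, (z' i - z i) ^ 2 := by linarith
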